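/- In the nested sequent calculus for GL, the conjunction rule is height-preserving invertible: if Γ{A ∧ B} has a cut-free derivation of height h, then Γ{A} has a cut-free derivation of height at most h, and likewise for Γ{B}. -/
import Mathlib


/-- Formulas of GL in negation normal form. -/
inductive Formula : Type where
  | pos : ℕ → Formula
  | neg : ℕ → Formula
  | and : Formula → Formula → Formula
  | or  : Formula → Formula → Formula
  | box : Formula → Formula
  | dia : Formula → Formula
deriving DecidableEq

/-- Negation `A⊥` of a formula, via De Morgan duality. -/
def Formula.negate : Formula → Formula
  | .pos a => .neg a
  | .neg a => .pos a
  | .and A B => .or A.negate B.negate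
  | .or A B => .and A.negate B.negate
  | .box A => .dia A.negate
  | .dia A => .box A.negate

/-- An element of a nested sequent: a formula or a nested (bracketed) sequent. -/
inductive SeqElem : Type where
  | fml : Formula → SeqElem
  | nest : List SeqElem → SeqElem

/-- A nested sequent. -/
abbrev Sequent := List SeqElem

/-- Unary contexts: a nested sequent with a single hole. -/
inductive Ctx : Type where
  | hole : Sequent → Ctx
  | nest : Sequent → Ctx → Ctx

/-- Fill the hole of a context with a sequent. -/
def Ctx.fill : Ctx → Sequent → Sequent
  | .hole Δ, Γ => Δ ++ Γ
  | .nest Δ c, Γ => .nest (c.fill Γ) :: Δ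

/-- Depth of a context: number of brackets surrounding the hole. -/
def Ctx.depth : Ctx → ℕ
  | .hole _ => 0
  | .nest _ c => c.depth + 1

/-- Equivalence of nested sequents up to (deep) exchange. -/
inductive SeqEquiv : Sequent → Sequent → Prop where
  | nil : SeqEquiv [] []
  | cons {e : SeqElem} {Γ Δ : Sequent} : SeqEquiv Γ Δ → SeqEquiv (e :: Γ) (e :: Δ)
  | consNest {Γ' Δ' Γ Δ : Sequent} :
      SeqEquiv Γ' Δ' → SeqEquiv Γ Δ → SeqEquiv (.nest Γ' :: Γ) (.nest Δ' :: Δ)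
  | swap (a b : SeqElem) (Γ : Sequent) : SeqEquiv (a :: b :: Γ) (b :: a :: Γ)
  | trans {Γ Δ Θ : Sequent} : SeqEquiv Γ Δ → SeqEquiv Δ Θ → SeqEquiv Γ Θ

/-- `DerivH n Γ`: `Γ` has a cut-free derivation of height at most `n`. -/
inductive DerivH : ℕ → Sequent → Prop where
  | id (n : ℕ) (c : Ctx) (a : ℕ) :
      DerivH n (c.fill [.fml (.pos a), .fml (.neg a)])
  | and {n : ℕ} {c : Ctx} {A B : Formula} :
      DerivH n (c.fill [.fml A]) → DerivH n (c.fill [.fml B]) →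
      DerivH (n + 1) (c.fill [.fml (.and A B)])
  | or {n : ℕ} {c : Ctx} {A B : Formula} :
      DerivH n (c.fill [.fml A, .fml B]) →
      DerivH (n + 1) (c.fill [.fml (.or A B)])
  | box {n : ℕ} {c : Ctx} {A : Formula} :
      DerivH n (c.fill [.nest [.fml (.dia A.negate), .fml A]]) →
      DerivH (n + 1) (c.fill [.fml (.box A)])
  | dia {n : ℕ} (c d : Ctx) {A : Formula} :
      0 < d.depth →
      DerivH n (c.fill (d.fill [.fml A] ++ [.fml (.dia A)])) →
      DerivH (n + 1) (c.fill (d.fill [] ++ [.fml (.dia A)]))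
  | exch {n : ℕ} {Γ Δ : Sequent} : SeqEquiv Γ Δ → DerivH n Γ → DerivH n Δ
  | up {n : ℕ} {Γ : Sequent} : DerivH n Γ → DerivH (n + 1) Γ

/-- Derivability where cut is permitted on formulas satisfying `P`. -/
inductive DerivWith (P : Formula → Prop) : Sequent → Prop where
  | id (c : Ctx) (a : ℕ) :
      DerivWith P (c.fill [.fml (.pos a), .fml (.neg a)])
  | and {c : Ctx} {A B : Formula} :
      DerivWith P (c.fill [.fml A]) → DerivWith P (c.fill [.fml B]) →
      DerivWith P (c.fill [.fml (.and A B)])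
  | or {c : Ctx} {A B : Formula} :
      DerivWith P (c.fill [.fml A, .fml B]) →
      DerivWith P (c.fill [.fml (.or A B)])
  | box {c : Ctx} {A : Formula} :
      DerivWith P (c.fill [.nest [.fml (.dia A.negate), .fml A]]) →
      DerivWith P (c.fill [.fml (.box A)])
  | dia (c d : Ctx) {A : Formula} :
      0 < d.depth →
      DerivWith P (c.fill (d.fill [.fml A] ++ [.fml (.dia A)])) →
      DerivWith P (c.fill (d.fill [] ++ [.fml (.dia A)]))
  | cut {c : Ctx} {A : Formula} : P A →
      DerivWith P (c.fill [.fml A]) → DerivWith P (c.fill [.fml A.negate]) →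
      DerivWith P (c.fill [])
  | exch {Γ Δ : Sequent} : SeqEquiv Γ Δ → DerivWith P Γ → DerivWith P Δ

/-- Cut-free derivability. -/
abbrev Deriv : Sequent → Prop := DerivWith (fun _ => False)

namespace AndInv

mutual
/-- Element-level replacement of `A ∧ B` by `X`. -/
inductive ReplE (A B X : Formula) : SeqElem → SeqElem → Prop where
  | fml (F) : ReplE A B X (.fml F) (.fml F)
  | repl : ReplE A B X (.fml (.and A B)) (.fml X)
  | nest {Γ Δ} : Repl A B X Γ Δ → ReplE A B X (.nest Γ) (.nest Δ)

/-- Sequent-level replacement of some occurrences of `A ∧ B` by `X`. -/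
inductive Repl (A B X : Formula) : Sequent → Sequent → Prop where
  | nil : Repl A B X [] []
  | cons {e e' Γ Δ} : ReplE A B X e e' → Repl A B X Γ Δ → Repl A B X (e :: Γ) (e' :: Δ)
end

inductive ReplCtx (A B X : Formula) : Ctx → Ctx → Prop where
  | hole {Γ Δ} : Repl A B X Γ Δ → ReplCtx A B X (.hole Γ) (.hole Δ)
  | nest {Γ Δ c c'} : Repl A B X Γ Δ → ReplCtx A B X c c' →
      ReplCtx A B X (.nest Γ c) (.nest Δ c')

variable {A B X : Formula}

mutual
theorem ReplE.refl : ∀ e, ReplE A B X e e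
  | .fml F => .fml F
  | .nest Γ => .nest (Repl.refl Γ)

theorem Repl.refl : ∀ Γ, Repl A B X Γ Γ
  | [] => .nil
  | e :: Γ => .cons (ReplE.refl e) (Repl.refl Γ)
end

theorem ReplCtx.refl : ∀ c, ReplCtx A B X c c
  | .hole Γ => .hole (Repl.refl Γ)
  | .nest Γ c => .nest (Repl.refl Γ) (ReplCtx.refl c)

theorem Repl.append {Γ₁ Δ₁ Γ₂ Δ₂} (h₁ : Repl A B X Γ₁ Δ₁) (h₂ : Repl A B X Γ₂ Δ₂) :
    Repl A B X (Γ₁ ++ Γ₂) (Δ₁ ++ Δ₂) := by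
  induction Γ₁ generalizing Δ₁ with
  | nil => cases h₁; exact h₂
  | cons e Γ ih => cases h₁ with | cons he ht => exact .cons he (ih ht)

theorem Repl.append_inv {Γ₁ Γ₂ Θ} (h : Repl A B X (Γ₁ ++ Γ₂) Θ) :
    ∃ Δ₁ Δ₂, Θ = Δ₁ ++ Δ₂ ∧ Repl A B X Γ₁ Δ₁ ∧ Repl A B X Γ₂ Δ₂ := by
  induction Γ₁ generalizing Θ with
  | nil => exact ⟨[], Θ, rfl, .nil, h⟩
  | cons e Γ₁ ih =>
    cases h with
    | cons he ht =>
      obtain ⟨Δ₁, Δ₂, rfl, h₁, h₂⟩ := ih ht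
      exact ⟨_ :: Δ₁, Δ₂, rfl, .cons he h₁, h₂⟩

theorem ReplCtx.fill {c c' s s'} (hc : ReplCtx A B X c c') (hs : Repl A B X s s') :
    Repl A B X (c.fill s) (c'.fill s') := by
  induction hc with
  | hole h => exact h.append hs
  | nest h _ ih => exact .cons (.nest ih) h

theorem ReplCtx.fill_inv {c s Θ} (h : Repl A B X (c.fill s) Θ) :
    ∃ c' s', Θ = c'.fill s' ∧ ReplCtx A B X c c' ∧ Repl A B X s s' := by
  induction c generalizing Θ with
  | hole Δ =>
    obtain ⟨Δ₁, Δ₂, rfl, h₁, h₂⟩ := Repl.append_inv h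
    exact ⟨.hole Δ₁, Δ₂, rfl, .hole h₁, h₂⟩
  | nest Δ c ih =>
    cases h with
    | cons he ht =>
      cases he with
      | nest hn =>
        obtain ⟨c', s', rfl, hc, hs⟩ := ih hn
        exact ⟨.nest _ c', s', rfl, .nest ht hc, hs⟩

theorem ReplCtx.depth_eq {c c'} (h : ReplCtx A B X c c') : c'.depth = c.depth := by
  induction h with
  | hole => rfl
  | nest _ _ ih => simp [Ctx.depth, ih]

/-- Replacement can be pulled back along sequent equivalence. -/
theorem repl_equiv {Γ Δ : Sequent} (h : SeqEquiv Γ Δ) :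
    ∀ Θ, Repl A B X Δ Θ → ∃ Γ', Repl A B X Γ Γ' ∧ SeqEquiv Γ' Θ := by
  induction h with
  | nil => intro Θ hr; cases hr; exact ⟨[], .nil, .nil⟩
  | cons _ ih =>
    intro Θ hr
    cases hr with
    | cons he ht =>
      obtain ⟨Γ', h₁, h₂⟩ := ih _ ht
      exact ⟨_ :: Γ', .cons he h₁, .cons h₂⟩
  | consNest hin _ ihin ih =>
    intro Θ hr
    cases hr with
    | cons he ht =>
      cases he with
      | nest hn =>
        obtain ⟨Γ₀', hi₁, hi₂⟩ := ihin _ hn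
        obtain ⟨Γ', h₁, h₂⟩ := ih _ ht
        exact ⟨.nest Γ₀' :: Γ', .cons (.nest hi₁) h₁, .consNest hi₂ h₂⟩
  | swap a b Γ =>
    intro Θ hr
    cases hr with
    | cons heb ht =>
      cases ht with
      | cons hea ht' =>
        exact ⟨_ :: _ :: _, .cons hea (.cons heb ht'), .swap _ _ _⟩
  | trans _ _ ih₁ ih₂ =>
    intro Θ hr
    obtain ⟨Γ', h₁, h₂⟩ := ih₂ _ hr
    obtain ⟨Γ'', h₁', h₂'⟩ := ih₁ _ h₁
    exact ⟨Γ'', h₁', h₂'.trans h₂⟩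

/-- Main lemma: replacement preserves derivability at the same height. -/
theorem repl_deriv (hX : X = A ∨ X = B) {n Γ} (hd : DerivH n Γ) :
    ∀ Θ, Repl A B X Γ Θ → DerivH n Θ := by
  induction hd with
  | id n c a =>
    intro Θ hr
    obtain ⟨c', s', rfl, hc, hs⟩ := ReplCtx.fill_inv hr
    cases hs with
    | cons he₁ ht₁ =>
      cases ht₁ with
      | cons he₂ ht₂ =>
        cases ht₂
        cases he₁; cases he₂
        exact .id n c' a
  | and h₁ h₂ ih₁ ih₂ =>
    intro Θ hr
    obtain ⟨c', s', rfl, hc, hs⟩ := ReplCtx.fill_inv hr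
    cases hs with
    | cons he ht =>
      cases ht
      cases he with
      | fml =>
        exact .and (ih₁ _ (hc.fill (Repl.refl _))) (ih₂ _ (hc.fill (Repl.refl _)))
      | repl =>
        rcases hX with rfl | rfl
        · exact .up (ih₁ _ (hc.fill (Repl.refl _)))
        · exact .up (ih₂ _ (hc.fill (Repl.refl _)))
  | or h ih =>
    intro Θ hr
    obtain ⟨c', s', rfl, hc, hs⟩ := ReplCtx.fill_inv hr
    cases hs with
    | cons he ht =>
      cases ht
      cases he with
      | fml => exact .or (ih _ (hc.fill (Repl.refl _)))
  | box h ih =>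
    intro Θ hr
    obtain ⟨c', s', rfl, hc, hs⟩ := ReplCtx.fill_inv hr
    cases hs with
    | cons he ht =>
      cases ht
      cases he with
      | fml => exact .box (ih _ (hc.fill (Repl.refl _)))
  | dia c d hdep h ih =>
    intro Θ hr
    obtain ⟨c', s', rfl, hc, hs⟩ := ReplCtx.fill_inv hr
    obtain ⟨Δ₁, Δ₂, rfl, h₁, h₂⟩ := Repl.append_inv hs
    obtain ⟨d', s'', rfl, hdc, hs''⟩ := ReplCtx.fill_inv h₁
    cases hs''
    cases h₂ with
    | cons he ht =>
      cases ht
      cases he with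
      | fml =>
        refine .dia c' d' (hdc.depth_eq ▸ hdep) ?_
        exact ih _ (hc.fill ((hdc.fill (Repl.refl _)).append (Repl.refl _)))
  | exch he h ih =>
    intro Θ hr
    obtain ⟨Γ', h₁, h₂⟩ := repl_equiv he _ hr
    exact .exch h₂ (ih _ h₁)
  | up h ih =>
    intro Θ hr
    exact .up (ih _ hr)

end AndInv

/-- the conjunction rule is height-preserving invertible. -/
theorem and_inversion (h : ℕ) (c : Ctx) (A B : Formula)
    (hd : DerivH h (c.fill [.fml (.and A B)])) :
    DerivH h (c.fill [.fml A]) ∧ DerivH h (c.fill [.fml B]) := by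
  constructor
  · exact AndInv.repl_deriv (Or.inl rfl) hd _
      ((AndInv.ReplCtx.refl c).fill (.cons .repl .nil))
  · exact AndInv.repl_deriv (Or.inr rfl) hd _
      ((AndInv.ReplCtx.refl c).fill (.cons .repl .nil))
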